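/- Let $m \geq 2$ and consider group masses $S_1 = \dots = S_{m-1} = m + 1$ and $S_m = m$ for the sorted-insertion grouping, versus masses $S'_1 = m^2$ and $S'_2 = \dots = S'_m = 1$ for the alternative grouping (all on the same Hamiltonian with $\|c\|_2^2 = m^2 + m - 1$). Then $\frac{(\sum_{j=1}^m \sqrt{S_j})^2}{(\sum_{j=1}^m \sqrt{S'_j})^2} \geq \frac{m^3}{(2m - 1)^2} \geq \frac{m}{4}$. -/

import Mathlib

/-!
The alternative grouping has `√(m²) + (m - 1)·√1 = 2m - 1`, while every sorted-insertion
mass is at least `m`, so its square-root sum is at least `m·√m`. Squaring gives the ratio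
bound `m³/(2m - 1)²`, and `(2m - 1)² ≤ 4m²` gives `m/4`.
-/

namespace MaximalSeparation

lemma sqrt_sq_add_sub_one_mul_sqrt_one {x : ℝ} (hx : 0 ≤ x) :
    Real.sqrt (x ^ 2) + (x - 1) * Real.sqrt 1 = 2 * x - 1 := by
  rw [Real.sqrt_sq hx, Real.sqrt_one]
  ring

lemma mul_sqrt_le_sub_one_mul_sqrt_add_one_add_sqrt {x : ℝ} (hx : 1 ≤ x) :
    x * Real.sqrt x ≤ (x - 1) * Real.sqrt (x + 1) + Real.sqrt x := by
  have hsqrt : Real.sqrt x ≤ Real.sqrt (x + 1) := Real.sqrt_le_sqrt (by linarith)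
  calc x * Real.sqrt x = (x - 1) * Real.sqrt x + Real.sqrt x := by ring
    _ ≤ (x - 1) * Real.sqrt (x + 1) + Real.sqrt x := by gcongr

lemma pow_three_le_sq_sub_one_mul_sqrt_add_one_add_sqrt {x : ℝ} (hx : 1 ≤ x) :
    x ^ 3 ≤ ((x - 1) * Real.sqrt (x + 1) + Real.sqrt x) ^ 2 :=
  calc x ^ 3 = (x * Real.sqrt x) ^ 2 := by rw [mul_pow, Real.sq_sqrt (by linarith)]; ring
    _ ≤ _ := pow_le_pow_left₀ (by positivity) (mul_sqrt_le_sub_one_mul_sqrt_add_one_add_sqrt hx) 2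

lemma div_four_le_pow_three_div_sq {x : ℝ} (hx : 1 / 2 < x) :
    x / 4 ≤ x ^ 3 / (2 * x - 1) ^ 2 := by
  rw [div_le_div_iff₀ (by norm_num) (by nlinarith)]
  nlinarith

end MaximalSeparation

open MaximalSeparation in
/-- Maximal-separation construction: with sorted-insertion group masses
`m+1` (for `m-1` groups) and `m` (one group) versus alternative masses `m²`
(one group) and `1` (for `m-1` groups), the ratio of minimized variances is at
least `m³/(2m-1)² ≥ m/4`. -/
theorem maximal_separation_ratio (m : ℕ) (hm : 2 ≤ m) :
    (((m : ℝ) - 1) * Real.sqrt ((m : ℝ) + 1) + Real.sqrt (m : ℝ)) ^ 2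
        / (Real.sqrt ((m : ℝ) ^ 2) + ((m : ℝ) - 1) * Real.sqrt 1) ^ 2
      ≥ (m : ℝ) ^ 3 / (2 * (m : ℝ) - 1) ^ 2 ∧
    (m : ℝ) ^ 3 / (2 * (m : ℝ) - 1) ^ 2 ≥ (m : ℝ) / 4 := by
  have hm' : (1 : ℝ) ≤ m := by exact_mod_cast (by omega : 1 ≤ m)
  rw [sqrt_sq_add_sub_one_mul_sqrt_one (by linarith)]
  exact ⟨div_le_div_of_nonneg_right (pow_three_le_sq_sub_one_mul_sqrt_add_one_add_sqrt hm')
      (sq_nonneg _), div_four_le_pow_three_div_sq (by linarith)⟩
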